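/- arXiv:1711.08335 — 4 statements merged into one kernel-verified Lean document; each statement's English description precedes it below -/
import Mathlib

section
/- If α_m = γ ≠ 0 and the generalized-α update relation holds, then the temporal energy identity Δt⟨φ_{n+α_f}, φ̇_{n+α_m}⟩ = E_{n+1} − E_n + (α_f − 1/2)‖φ_{n+1} − φ_n‖² = E_{n+1} − E_n + Δt²(α_f − 1/2)‖φ̇_{n+α_m}‖² holds. -/
open scoped RealInnerProductSpace

/-- Temporal energy identity of the generalized-α method with `α_m = γ ≠ 0`:
`Δt⟨φ_{n+α_f}, φ̇_{n+α_m}⟩ = E_{n+1} − E_n + (α_f − 1/2)‖φ_{n+1} − φ_n‖²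
 = E_{n+1} − E_n + Δt²(α_f − 1/2)‖φ̇_{n+α_m}‖²`, where `E_n = (1/2)⟨φ_n, φ_n⟩`. -/
theorem genAlpha_temporal_energy_identity
    {H : Type*} [NormedAddCommGroup H] [InnerProductSpace ℝ H]
    (Δt : ℝ) (hΔt : 0 < Δt) (αf αm γ : ℝ) (hαmγ : αm = γ) (hγ : γ ≠ 0)
    (φn φn1 φdn φdn1 : H)
    (hupdate : φn1 = φn + Δt • ((1 - γ) • φdn + γ • φdn1)) :
    Δt * ⟪(1 - αf) • φn + αf • φn1, (1 - αm) • φdn + αm • φdn1⟫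
        = (1 / 2) * ⟪φn1, φn1⟫ - (1 / 2) * ⟪φn, φn⟫ + (αf - 1 / 2) * ‖φn1 - φn‖ ^ 2
      ∧
    Δt * ⟪(1 - αf) • φn + αf • φn1, (1 - αm) • φdn + αm • φdn1⟫
        = (1 / 2) * ⟪φn1, φn1⟫ - (1 / 2) * ⟪φn, φn⟫
          + Δt ^ 2 * (αf - 1 / 2) * ‖(1 - αm) • φdn + αm • φdn1‖ ^ 2 := by
  subst hαmγ
  have hv : φn1 - φn = Δt • ((1 - αm) • φdn + αm • φdn1) := by
    rw [hupdate]; abel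
  have key : Δt * ⟪(1 - αf) • φn + αf • φn1, (1 - αm) • φdn + αm • φdn1⟫
      = ⟪(1 - αf) • φn + αf • φn1, φn1 - φn⟫ := by
    rw [hv, real_inner_smul_right]
  have hnorm : ‖φn1 - φn‖ ^ 2 = ⟪φn1 - φn, φn1 - φn⟫ :=
    (real_inner_self_eq_norm_sq _).symm
  have hnorm2 : Δt ^ 2 * ‖(1 - αm) • φdn + αm • φdn1‖ ^ 2 = ⟪φn1 - φn, φn1 - φn⟫ := by
    rw [hv, real_inner_smul_left, real_inner_smul_right, ← real_inner_self_eq_norm_sq]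
    ring
  constructor
  · rw [key, hnorm]
    simp only [inner_add_left, inner_sub_left, inner_sub_right, real_inner_smul_left,
      real_inner_comm φn1 φn]
    ring
  · rw [key, show Δt ^ 2 * (αf - 1 / 2) * ‖(1 - αm) • φdn + αm • φdn1‖ ^ 2
      = (αf - 1 / 2) * (Δt ^ 2 * ‖(1 - αm) • φdn + αm • φdn1‖ ^ 2) from by ring, hnorm2]
    simp only [inner_add_left, inner_sub_left, inner_sub_right, real_inner_smul_left,
      real_inner_comm φn1 φn]
    ring
end

section
/- If α_m = γ ≠ 0, α_f ≥ 1/2, the generalized-α update relation holds, and the scheme is dissipative at the intermediate level in the sense that ⟨φ_{n+α_f}, φ̇_{n+α_m}⟩ ≤ 0, then the discrete energy decays over the time step: E_{n+1} ≤ E_n. -/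
open scoped RealInnerProductSpace

/-- Discrete energy decay of the generalized-α method: if `α_m = γ ≠ 0`, `α_f ≥ 1/2`,
and the scheme is dissipative at the intermediate level
(`⟨φ_{n+α_f}, φ̇_{n+α_m}⟩ ≤ 0`), then `E_{n+1} ≤ E_n` where `E_n = (1/2)⟨φ_n, φ_n⟩`. -/
theorem genAlpha_energy_decay
    {H : Type*} [NormedAddCommGroup H] [InnerProductSpace ℝ H]
    (Δt : ℝ) (hΔt : 0 < Δt) (αf αm γ : ℝ)
    (hαmγ : αm = γ) (hγ : γ ≠ 0) (hαf : 1 / 2 ≤ αf)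
    (φn φn1 φdn φdn1 : H)
    (hupdate : φn1 = φn + Δt • ((1 - γ) • φdn + γ • φdn1))
    (hdiss : ⟪(1 - αf) • φn + αf • φn1, (1 - αm) • φdn + αm • φdn1⟫ ≤ 0) :
    (1 / 2) * ⟪φn1, φn1⟫ ≤ (1 / 2) * ⟪φn, φn⟫ := by
  have hv : (1 - γ) • φdn + γ • φdn1 = Δt⁻¹ • (φn1 - φn) := by
    rw [hupdate, add_sub_cancel_left, inv_smul_smul₀ hΔt.ne']
  rw [hαmγ, hv, inner_smul_right] at hdiss
  have hdiss' : ⟪(1 - αf) • φn + αf • φn1, φn1 - φn⟫ ≤ 0 := by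
    have hpos : (0:ℝ) < Δt⁻¹ := inv_pos.mpr hΔt
    by_contra h
    push_neg at h
    nlinarith
  have hsq : (0:ℝ) ≤ ⟪φn1 - φn, φn1 - φn⟫ := real_inner_self_nonneg
  have hcomm : ⟪φn1, φn⟫ = ⟪φn, φn1⟫ := real_inner_comm _ _
  rw [inner_add_left, inner_smul_left, inner_smul_left, inner_sub_right,
    inner_sub_right] at hdiss'
  simp only [starRingEnd_apply, star_trivial] at hdiss'
  rw [hcomm] at hdiss'
  rw [inner_sub_left, inner_sub_right, inner_sub_right] at hsq
  nlinarith [hdiss', hsq, hαf, mul_nonneg (by linarith : (0:ℝ) ≤ αf - 1/2) hsq]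
end

section
/- Let A : H → H be a linear map with ⟨A v, v⟩ ≤ 0 for every v ∈ H. If α_m = γ ≠ 0, α_f ≥ 1/2, the generalized-α update relation holds and the scheme equation φ̇_{n+α_m} = A φ_{n+α_f} holds, then ‖φ_{n+1}‖ ≤ ‖φ_n‖; i.e. the generalized-α method with α_m = γ and α_f ≥ 1/2 is unconditionally energy-stable for dissipative linear evolution equations. -/
open scoped RealInnerProductSpace

/-- Unconditional energy stability of the generalized-α method with `α_m = γ ≠ 0` and
`α_f ≥ 1/2` for dissipative linear evolution equations: if `φ̇_{n+α_m} = A φ_{n+α_f}`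
with `⟨Av, v⟩ ≤ 0` for all `v`, then `‖φ_{n+1}‖ ≤ ‖φ_n‖`. -/
theorem genAlpha_unconditional_stability
    {H : Type*} [NormedAddCommGroup H] [InnerProductSpace ℝ H]
    (A : H →ₗ[ℝ] H) (hA : ∀ v : H, ⟪A v, v⟫ ≤ 0)
    (Δt : ℝ) (hΔt : 0 < Δt) (αf αm γ : ℝ)
    (hαmγ : αm = γ) (hγ : γ ≠ 0) (hαf : 1 / 2 ≤ αf)
    (φn φn1 φdn φdn1 : H)
    (hupdate : φn1 = φn + Δt • ((1 - γ) • φdn + γ • φdn1))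
    (hscheme : (1 - αm) • φdn + αm • φdn1 = A ((1 - αf) • φn + αf • φn1)) :
    ‖φn1‖ ≤ ‖φn‖ := by
  subst hαmγ
  set w : H := (1 - αf) • φn + αf • φn1 with hw
  have hd : φn1 - φn = Δt • A w := by
    rw [hupdate, ← hscheme]; abel
  have h1 : ⟪φn1 - φn, w⟫ ≤ 0 := by
    rw [hd, real_inner_smul_left]
    exact mul_nonpos_of_nonneg_of_nonpos hΔt.le (hA w)
  have h2 : ⟪φn1 - φn, w⟫ = (1 - αf) * ⟪φn1 - φn, φn⟫ + αf * ⟪φn1 - φn, φn1⟫ := by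
    simp [hw, inner_add_right, real_inner_smul_right]
  have e1 : ⟪φn1 - φn, φn⟫ = ⟪φn1, φn⟫ - ‖φn‖ ^ 2 := by
    rw [inner_sub_left, real_inner_self_eq_norm_sq]
  have e2 : ⟪φn1 - φn, φn1⟫ = ‖φn1‖ ^ 2 - ⟪φn1, φn⟫ := by
    rw [inner_sub_left, real_inner_self_eq_norm_sq, real_inner_comm]
  have hnn : 0 ≤ ‖φn1‖ ^ 2 - 2 * ⟪φn1, φn⟫ + ‖φn‖ ^ 2 := by
    have h := sq_nonneg ‖φn1 - φn‖
    rwa [norm_sub_sq_real] at h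
  have hsq : ‖φn1‖ ^ 2 ≤ ‖φn‖ ^ 2 := by nlinarith
  nlinarith [norm_nonneg φn1, norm_nonneg φn]
end

section
/- Suppose γ = 1/2 + α_m − α_f (the second-order accuracy condition) and α_m ≠ 0. Then there exist ε > 0 and a function μ : (−ε, ε) → ℝ such that for every z ∈ (−ε, ε), μ(z) is an eigenvalue of the amplification matrix M(z) (i.e. det(M(z) − μ(z)·I) = 0), and μ(z) − e^z = O(z³) as z → 0; i.e. the principal root of the generalized-α method matches the exact amplification e^z to second order. -/
/-!
Multiplying `det (M z - μ)` by `αm - γ αf z` gives a quadratic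
`p μ = charA z * μ² + charB z * μ + charC z` with coefficients affine in `z`, which at `z = 0`
has the simple root `μ = 1`. Under the accuracy condition, Taylor expansion shows that `e^z`
solves it up to `O(z³)`. The branch of roots through `1` is within a bounded multiple of this
residual, because `p r - p x = (r - x) (charA z * (r + x) + charB z)` and the slope factor tends to
`2 charA 0 + charB 0 = 1`.
-/

open Filter Topology Asymptotics

section QuadraticRoot

variable {α : Type*} {l : Filter α} {a b c r x : α → ℝ} {L : ℝ}

theorem isBigO_sub_of_quadratic_eq_zero
    (hr : ∀ᶠ z in l, a z * (r z * r z) + b z * r z + c z = 0)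
    (hslope : Tendsto (fun z => a z * (r z + x z) + b z) l (𝓝 L)) (hL : L ≠ 0) :
    (fun z => r z - x z) =O[l] fun z => a z * (x z * x z) + b z * x z + c z := by
  have hinv : (fun z => (a z * (r z + x z) + b z)⁻¹) =O[l] fun _ => (1 : ℝ) :=
    (hslope.inv₀ hL).isBigO_one ℝ
  have hres := isBigO_refl (fun z => a z * (x z * x z) + b z * x z + c z) l
  refine (hinv.mul hres).neg_left.congr' ?_ (by simp)
  filter_upwards [hr, hslope.eventually_ne hL] with z hrz hz
  field_simp
  linear_combination -hrz

end QuadraticRoot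

section QuadraticRootBranch

variable {X : Type*} [TopologicalSpace X] {a b c x : X → ℝ} {z₀ : X}

theorem exists_quadratic_eq_zero_isBigO_sub (ha : ContinuousAt a z₀) (hb : ContinuousAt b z₀)
    (hc : ContinuousAt c z₀) (hx : ContinuousAt x z₀) (ha₀ : a z₀ ≠ 0)
    (hroot : a z₀ * (x z₀ * x z₀) + b z₀ * x z₀ + c z₀ = 0)
    (hsimple : 0 < 2 * a z₀ * x z₀ + b z₀) :
    ∃ r : X → ℝ, (∀ᶠ z in 𝓝 z₀, a z * (r z * r z) + b z * r z + c z = 0) ∧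
      (fun z => r z - x z) =O[𝓝 z₀] fun z => a z * (x z * x z) + b z * x z + c z := by
  set d : X → ℝ := fun z => discrim (a z) (b z) (c z)
  have hd : ContinuousAt d z₀ := by unfold d discrim; fun_prop
  have hd₀ : d z₀ = (2 * a z₀ * x z₀ + b z₀) ^ 2 := discrim_eq_sq_of_quadratic_eq_zero hroot
  set r : X → ℝ := fun z => (-b z + √(d z)) / (2 * a z)
  have hr : ContinuousAt r z₀ := (hb.neg.add hd.sqrt).div (ha.const_mul 2) (by simpa using ha₀)
  have hr₀ : r z₀ = x z₀ := by
    simp only [r, hd₀, Real.sqrt_sq hsimple.le]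
    field_simp
    ring
  have hr_root : ∀ᶠ z in 𝓝 z₀, a z * (r z * r z) + b z * r z + c z = 0 := by
    have hd₀_pos : 0 < d z₀ := hd₀ ▸ by positivity
    filter_upwards [ha.eventually_ne ha₀, hd.eventually (lt_mem_nhds hd₀_pos)]
      with z haz hdz
    exact (quadratic_eq_zero_iff haz (Real.mul_self_sqrt hdz.le).symm _).2 (Or.inl rfl)
  have hslope : Tendsto (fun z => a z * (r z + x z) + b z) (𝓝 z₀)
      (𝓝 (2 * a z₀ * x z₀ + b z₀)) := by
    have hlim : a z₀ * (r z₀ + x z₀) + b z₀ = 2 * a z₀ * x z₀ + b z₀ := by rw [hr₀]; ring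
    exact hlim ▸ ((ha.mul (hr.add hx)).add hb).tendsto
  exact ⟨r, hr_root, isBigO_sub_of_quadratic_eq_zero hr_root hslope hsimple.ne'⟩

end QuadraticRootBranch

theorem Real.exp_mul_sub_taylor_isBigO (k : ℝ) :
    (fun z => Real.exp (k * z) - (1 + k * z + (k * z) ^ 2 / 2)) =O[𝓝 0] (· ^ 3) := by
  have hk : Tendsto (k * ·) (𝓝 0) (𝓝 0) := (continuous_const_mul k).tendsto' 0 0 (mul_zero k)
  have h := (Real.exp_sub_sum_range_isBigO_pow 3).comp_tendsto hk
  simp only [Function.comp_def, Finset.sum_range_succ, Finset.sum_range_zero, mul_pow] at h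
  refine (h.trans (isBigO_const_mul_self _ _ _)).congr_left fun z => ?_
  norm_num [mul_pow]

namespace GenAlpha

variable (αf αm γ : ℝ)

def charA (z : ℝ) : ℝ := αm - γ * αf * z

def charB (z : ℝ) : ℝ := 1 - 2 * αm - (γ + αf - 2 * γ * αf) * z

def charC (z : ℝ) : ℝ := αm - 1 - (1 - γ) * (1 - αf) * z

theorem continuous_charA : Continuous (charA αf αm γ) := by unfold charA; fun_prop

theorem continuous_charB : Continuous (charB αf αm γ) := by unfold charB; fun_prop

theorem continuous_charC : Continuous (charC αf αm γ) := by unfold charC; fun_prop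

variable {αf αm γ}

theorem det_sub_smul_one_mul_charA {A : Matrix (Fin 2) (Fin 2) ℝ} {z : ℝ}
    (hA : ∀ v : Fin 2 → ℝ,
      αm * (A.mulVec v 1) = z * (1 - αf) * v 0 + z * αf * (A.mulVec v 0) - (1 - αm) * v 1
        ∧ A.mulVec v 0 = v 0 + (1 - γ) * v 1 + γ * (A.mulVec v 1)) (μ : ℝ) :
    (A - μ • (1 : Matrix (Fin 2) (Fin 2) ℝ)).det * charA αf αm γ z
      = charA αf αm γ z * (μ * μ) + charB αf αm γ z * μ + charC αf αm γ z := by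
  obtain ⟨h₁₀, h₀₀⟩ := hA ![1, 0]
  obtain ⟨h₁₁, h₀₁⟩ := hA ![0, 1]
  simp only [Matrix.mulVec, dotProduct, Fin.sum_univ_two, Matrix.cons_val_zero,
    Matrix.cons_val_one, Matrix.cons_val_fin_one, mul_one, mul_zero, add_zero, sub_zero,
    zero_add] at h₁₀ h₀₀ h₁₁ h₀₁
  have hdet : (A - μ • (1 : Matrix (Fin 2) (Fin 2) ℝ)).det
      = (A 0 0 - μ) * (A 1 1 - μ) - A 0 1 * A 1 0 := by
    simp [Matrix.det_fin_two]
  rw [h₀₀] at h₁₀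
  rw [h₀₁] at h₁₁
  rw [hdet, h₀₀, h₀₁, charA, charB, charC]
  linear_combination (1 - μ) * h₁₁ - (γ * μ + 1 - γ) * h₁₀

theorem char_exp_isBigO_pow_three (hacc : γ = 1 / 2 + αm - αf) :
    (fun z => charA αf αm γ z * (Real.exp z * Real.exp z) + charB αf αm γ z * Real.exp z
      + charC αf αm γ z) =O[𝓝 0] (· ^ 3) := by
  have ha := ((continuous_charA αf αm γ).tendsto 0).isBigO_one ℝ
  have hb := ((continuous_charB αf αm γ).tendsto 0).isBigO_one ℝ
  have h₂ := (ha.mul (Real.exp_mul_sub_taylor_isBigO 2)).congr_right fun _ => one_mul _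
  have h₁ := (hb.mul (Real.exp_mul_sub_taylor_isBigO 1)).congr_right fun _ => one_mul _
  refine ((h₂.add h₁).add (isBigO_const_mul_self (-(γ * αf + (γ + αf) / 2)) _ _)).congr_left
    fun z => ?_
  rw [← Real.exp_add, ← two_mul, one_mul, charA, charB, charC, hacc]
  ring

end GenAlpha

open GenAlpha

/-- Second-order accuracy of the generalized-α method: under the accuracy condition
`γ = 1/2 + α_m − α_f` (and `α_m ≠ 0`), the amplification matrix `M(z)` of the method
applied to `φ̇ = λφ` (with `z = λΔt`) has, for all sufficiently small `z`, an
eigenvalue `μ(z)` matching the exact amplification factor `e^z` to second order: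
`μ(z) − e^z = O(z³)` as `z → 0`. The matrix `M(z)` sends the state
`(φ_n, Δt φ̇_n)` to `(φ_{n+1}, Δt φ̇_{n+1})`, characterized by the two linear
equations of the scheme whenever `α_m − γ α_f z ≠ 0`. -/
theorem genAlpha_second_order_accuracy
    (αf αm γ : ℝ) (hacc : γ = 1 / 2 + αm - αf) (hαm : αm ≠ 0)
    (M : ℝ → Matrix (Fin 2) (Fin 2) ℝ)
    (hM : ∀ z : ℝ, αm - γ * αf * z ≠ 0 → ∀ v : Fin 2 → ℝ,
      αm * ((M z).mulVec v 1)
          = z * (1 - αf) * v 0 + z * αf * ((M z).mulVec v 0) - (1 - αm) * v 1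
        ∧ (M z).mulVec v 0 = v 0 + (1 - γ) * v 1 + γ * ((M z).mulVec v 1)) :
    ∃ ε > 0, ∃ μ : ℝ → ℝ,
      (∀ z ∈ Set.Ioo (-ε) ε, ((M z) - μ z • (1 : Matrix (Fin 2) (Fin 2) ℝ)).det = 0)
        ∧ (fun z => μ z - Real.exp z) =O[nhds (0 : ℝ)] fun z => z ^ 3 := by
  have ha := (continuous_charA αf αm γ).continuousAt (x := 0)
  obtain ⟨μ, hμ, hclose⟩ := exists_quadratic_eq_zero_isBigO_sub ha
    (continuous_charB αf αm γ).continuousAt (continuous_charC αf αm γ).continuousAt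
    Real.continuous_exp.continuousAt (by simpa [charA] using hαm)
    (by rw [charA, charB, charC, Real.exp_zero]; ring) (by norm_num [charA, charB])
  have hD : ∀ᶠ z in 𝓝 0, charA αf αm γ z ≠ 0 := ha.eventually_ne (by simpa [charA])
  obtain ⟨ε, hε, hball⟩ := Metric.eventually_nhds_iff_ball.1 (hμ.and hD)
  refine ⟨ε, hε, μ, fun z hz => ?_, hclose.trans (char_exp_isBigO_pow_three hacc)⟩
  obtain ⟨hroot, hDz⟩ := hball z (by simpa [Real.ball_eq_Ioo] using hz)
  exact (mul_eq_zero.1 ((det_sub_smul_one_mul_charA (hM z hDz) (μ z)).trans hroot)).resolve_right hDz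
end
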